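/- The serial dictatorship (SD) mechanism is 2-approximately hospital-strategyproof for matroid rank valuations: fix matroid rank valuations for the hospitals and strict complete preference orders for the doctors, and let X be the SD output for the true profile. For any hospital h and any matroid rank valuation v', let Y be the SD output when v_h is replaced by v' (all else unchanged). Then v_h(Y_h) ≤ 2·v_h(X_h). -/

import Mathlib

open Finset

/-- A matroid rank function on subsets of a finite ground set. -/
def IsMRF {α : Type*} [DecidableEq α] (v : Finset α → ℤ) : Prop :=
  v ∅ = 0 ∧
  (∀ (S : Finset α) (d : α), d ∉ S →
    v (insert d S) - v S = 0 ∨ v (insert d S) - v S = 1) ∧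
  (∀ (S T : Finset α) (d : α), S ⊆ T → d ∉ T →
    v (insert d T) - v T ≤ v (insert d S) - v S)

/-- The bundle of doctors assigned to hospital `h` under allocation `X`. -/
def bundle {n m : ℕ} (X : Fin m → Option (Fin n)) (h : Fin n) : Finset (Fin m) :=
  Finset.univ.filter (fun d => X d = some h)

/-- An allocation is non-redundant if every hospital's bundle is independent. -/
def NonRedundant {n m : ℕ} (v : Fin n → Finset (Fin m) → ℤ)
    (X : Fin m → Option (Fin n)) : Prop :=
  ∀ h, v h (bundle X h) = (bundle X h).card

/-- Hospital utilitarian welfare. -/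
def USW {n m : ℕ} (v : Fin n → Finset (Fin m) → ℤ) (X : Fin m → Option (Fin n)) : ℤ :=
  ∑ h, v h (bundle X h)

/-- Doctor `d` strictly prefers the first outcome to the second; every hospital is
strictly preferred to being unallocated (`none`). -/
def OptStrictPref {n m : ℕ} (P : Fin m → Fin n → Fin n → Prop) (d : Fin m) :
    Option (Fin n) → Option (Fin n) → Prop
  | some h, some h' => P d h h'
  | some _, none => True
  | none, _ => False

/-- `(h, S)` is a blocking pair for `X`. -/
def IsBlockingPair {n m : ℕ} (v : Fin n → Finset (Fin m) → ℤ)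
    (P : Fin m → Fin n → Fin n → Prop) (X : Fin m → Option (Fin n))
    (h : Fin n) (S : Finset (Fin m)) : Prop :=
  v h S = S.card ∧ v h (bundle X h) < v h S ∧
    ∀ d ∈ S, X d = some h ∨ OptStrictPref P d (some h) (X d)

/-- An allocation is stable if it is non-redundant and admits no blocking pair. -/
def Stable {n m : ℕ} (v : Fin n → Finset (Fin m) → ℤ)
    (P : Fin m → Fin n → Fin n → Prop) (X : Fin m → Option (Fin n)) : Prop :=
  NonRedundant v X ∧ ¬ ∃ h S, IsBlockingPair v P X h S

/-- The doctors (strictly) before `i` assigned to hospital `h` under `X`: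
the partial bundle of `h` at the start of doctor `i`'s turn in serial dictatorship. -/
def bundleBefore {n m : ℕ} (X : Fin m → Option (Fin n)) (h : Fin n) (i : Fin m) :
    Finset (Fin m) :=
  Finset.univ.filter (fun d => X d = some h ∧ d < i)

/-- `X` is the output of the serial dictatorship mechanism: processing doctors in
order, each doctor `i` is assigned to the first hospital (in `i`'s reported
preference order `P i`) whose marginal gain for `i`, given its current partial
bundle, is `1`; `i` stays unallocated if no such hospital exists. -/
def IsSDOutput {n m : ℕ} (v : Fin n → Finset (Fin m) → ℤ)
    (P : Fin m → Fin n → Fin n → Prop) (X : Fin m → Option (Fin n)) : Prop :=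
  ∀ i : Fin m,
    (∀ h, X i = some h →
      (v h (insert i (bundleBefore X h i)) - v h (bundleBefore X h i) = 1 ∧
       ∀ h', P i h' h →
         v h' (insert i (bundleBefore X h' i)) - v h' (bundleBefore X h' i) = 0)) ∧
    (X i = none → ∀ h,
      v h (insert i (bundleBefore X h i)) - v h (bundleBefore X h i) = 0)

/-!
Call a doctor *demoted* if it gets a hospital under `Y` that it likes less than its hospital
under `X`, and let `W` be the demoted doctors in `Y_h`. A doctor of `Y_h \ X_h` that is not
demoted was rejected by `h` in the truthful run, so it is spanned by `X_h`; hence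
`v_h(Y_h) ≤ v_h(X_h) + |W|`, and it remains to show `|W| ≤ |X_h \ Y_h| ≤ |X_h| = v_h(X_h)`.

Run both executions of serial dictatorship side by side. The potential
`|W_{<i}| - |(X_h \ Y_h)_{<i}| + ∑_{g ≠ h} (v_g(X_g^{<i} ∪ Y_g^{<i}) - v_g(X_g^{<i}))`
never increases: a doctor demoted from `x` to `y` raises the term of `y` (or `|W|` if `y = h`)
by at most one, and lowers the term of `x` by one because `x` rejected it in the manipulated
run (or raises `|X_h \ Y_h|` if `x = h`); every other change is nonpositive by submodularity.
The potential starts at `0` and its sum part is nonnegative.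
-/

namespace IsMRF

variable {α : Type*} [DecidableEq α] {v : Finset α → ℤ} {S T : Finset α} {d : α}

theorem le_rank_insert (hv : IsMRF v) (S : Finset α) (d : α) : v S ≤ v (insert d S) := by
  by_cases hd : d ∈ S
  · rw [insert_eq_of_mem hd]
  · rcases hv.2.1 S d hd with h | h <;> omega

theorem rank_insert_le (hv : IsMRF v) (S : Finset α) (d : α) : v (insert d S) ≤ v S + 1 := by
  by_cases hd : d ∈ S
  · rw [insert_eq_of_mem hd]; omega
  · rcases hv.2.1 S d hd with h | h <;> omega

theorem rank_insert_eq_of_subset (hv : IsMRF v) (hST : S ⊆ T) (hdT : d ∉ T)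
    (hS : v (insert d S) = v S) : v (insert d T) = v T := by
  have := hv.2.2 S T d hST hdT
  have := hv.le_rank_insert T d
  omega

theorem mono (hv : IsMRF v) (hST : S ⊆ T) : v S ≤ v T := by
  have hunion : ∀ B : Finset α, v S ≤ v (S ∪ B) := by
    intro B
    induction B using Finset.induction_on with
    | empty => simp
    | insert e B _ ih => rw [union_insert]; exact ih.trans (hv.le_rank_insert _ e)
  simpa [union_eq_right.2 hST] using hunion T

theorem rank_union_le_add_card (hv : IsMRF v) (S C : Finset α) :
    v (S ∪ C) ≤ v S + C.card := by
  induction C using Finset.induction_on with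
  | empty => simp
  | insert e C he ih =>
    rw [union_insert, card_insert_of_notMem he]
    have := hv.rank_insert_le (S ∪ C) e
    push_cast
    omega

theorem rank_union_eq_of_spanned (hv : IsMRF v) {A B : Finset α}
    (hB : ∀ e ∈ B, e ∉ A → v (insert e A) = v A) : v (A ∪ B) = v A := by
  induction B using Finset.induction_on with
  | empty => simp
  | insert e B _ ih =>
    rw [union_insert, ← ih fun e' he' => hB e' (mem_insert_of_mem he')]
    by_cases he : e ∈ A ∪ B
    · rw [insert_eq_of_mem he]
    · exact hv.rank_insert_eq_of_subset subset_union_left he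
        (hB e (mem_insert_self e B) fun heA => he (mem_union_left B heA))

end IsMRF

namespace SerialDictatorship

variable {n m : ℕ}

def prefixOf (S : Finset (Fin m)) (i : ℕ) : Finset (Fin m) :=
  S.filter fun e => (e : ℕ) < i

section prefixOf

variable {S : Finset (Fin m)} {i : ℕ}

@[simp]
theorem mem_prefixOf {e : Fin m} : e ∈ prefixOf S i ↔ e ∈ S ∧ (e : ℕ) < i :=
  mem_filter

@[simp]
theorem prefixOf_zero : prefixOf S 0 = ∅ := by
  ext; simp

theorem prefixOf_eq_self : prefixOf S m = S := by
  ext e; simp [e.isLt]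

theorem notMem_prefixOf_self (hi : i < m) : (⟨i, hi⟩ : Fin m) ∉ prefixOf S i := by
  simp

theorem prefixOf_succ_of_mem (hi : i < m) (hS : ⟨i, hi⟩ ∈ S) :
    prefixOf S (i + 1) = insert ⟨i, hi⟩ (prefixOf S i) := by
  ext e
  by_cases he : (e : ℕ) = i
  · obtain rfl : e = ⟨i, hi⟩ := Fin.ext he
    simp [hS]
  · simp only [mem_prefixOf, mem_insert, Fin.ext_iff, he, false_or]
    grind

theorem prefixOf_succ_of_notMem (hi : i < m) (hS : ⟨i, hi⟩ ∉ S) :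
    prefixOf S (i + 1) = prefixOf S i := by
  ext e
  by_cases he : (e : ℕ) = i
  · obtain rfl : e = ⟨i, hi⟩ := Fin.ext he
    simp [hS]
  · simp only [mem_prefixOf]
    grind

theorem card_prefixOf_succ (hi : i < m) :
    ((prefixOf S (i + 1)).card : ℤ) = (prefixOf S i).card + if ⟨i, hi⟩ ∈ S then 1 else 0 := by
  by_cases hS : ⟨i, hi⟩ ∈ S
  · rw [prefixOf_succ_of_mem hi hS, card_insert_of_notMem (notMem_prefixOf_self hi), if_pos hS]
    push_cast; rfl
  · rw [prefixOf_succ_of_notMem hi hS, if_neg hS, add_zero]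

end prefixOf

theorem mem_bundle {X : Fin m → Option (Fin n)} {g : Fin n} {e : Fin m} :
    e ∈ bundle X g ↔ X e = some g := by
  simp [bundle]

theorem bundleBefore_eq_prefixOf (X : Fin m → Option (Fin n)) (g : Fin n) {i : ℕ} (hi : i < m) :
    bundleBefore X g ⟨i, hi⟩ = prefixOf (bundle X g) i := by
  ext e
  simp [bundleBefore, mem_bundle, Fin.lt_def]

end SerialDictatorship

namespace IsSDOutput

open SerialDictatorship

variable {n m : ℕ} {v : Fin n → Finset (Fin m) → ℤ} {P : Fin m → Fin n → Fin n → Prop}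
  {X : Fin m → Option (Fin n)}

theorem rank_insert_bundleBefore_eq_of_not_prefers (hX : IsSDOutput v P X) {d : Fin m}
    {g : Fin n} (hP : Std.Trichotomous (P d)) (hdg : X d ≠ some g)
    (hpref : ∀ x, X d = some x → ¬ P d x g) :
    v g (insert d (bundleBefore X g d)) = v g (bundleBefore X g d) := by
  rw [← sub_eq_zero]
  cases hXd : X d with
  | none => exact (hX d).2 hXd g
  | some x =>
    rcases trichotomous_of (P d) g x with hgx | rfl | hxg
    · exact ((hX d).1 x hXd).2 g hgx
    · exact absurd hXd hdg
    · exact absurd hxg (hpref x hXd)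

theorem rank_insert_bundle_eq_of_not_prefers (hX : IsSDOutput v P X) {e : Fin m} {g : Fin n}
    (hvg : IsMRF (v g)) (hP : Std.Trichotomous (P e)) (he : e ∉ bundle X g)
    (hpref : ∀ x, X e = some x → ¬ P e x g) :
    v g (insert e (bundle X g)) = v g (bundle X g) := by
  have hsub : bundleBefore X g e ⊆ bundle X g := fun d hd => by
    simp only [bundleBefore, bundle, mem_filter] at hd ⊢
    exact ⟨hd.1, hd.2.1⟩
  exact hvg.rank_insert_eq_of_subset hsub he
    (hX.rank_insert_bundleBefore_eq_of_not_prefers hP (mt mem_bundle.2 he) hpref)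

theorem nonRedundant (hX : IsSDOutput v P X) (hv : ∀ g, v g ∅ = 0) : NonRedundant v X := by
  intro g
  suffices ∀ i ≤ m, v g (prefixOf (bundle X g) i) = (prefixOf (bundle X g) i).card by
    simpa only [prefixOf_eq_self] using this m le_rfl
  intro i
  induction i with
  | zero => simp [hv]
  | succ i ih =>
    intro hi
    have hi' : i < m := hi
    by_cases hd : (⟨i, hi'⟩ : Fin m) ∈ bundle X g
    · have hgain := ((hX ⟨i, hi'⟩).1 g (mem_bundle.1 hd)).1
      rw [bundleBefore_eq_prefixOf X g hi'] at hgain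
      rw [prefixOf_succ_of_mem hi' hd, card_insert_of_notMem (notMem_prefixOf_self hi')]
      push_cast
      linarith [ih hi'.le]
    · rw [prefixOf_succ_of_notMem hi' hd]
      exact ih hi'.le

end IsSDOutput

namespace SerialDictatorship

open scoped Classical

variable {n m : ℕ} {v w : Fin n → Finset (Fin m) → ℤ} {P : Fin m → Fin n → Fin n → Prop}
  {X Y : Fin m → Option (Fin n)}

def IsDemoted (P : Fin m → Fin n → Fin n → Prop) (X Y : Fin m → Option (Fin n)) (d : Fin m) :
    Prop :=
  ∃ x y, X d = some x ∧ Y d = some y ∧ P d x y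

noncomputable def demotedInto (P : Fin m → Fin n → Fin n → Prop) (X Y : Fin m → Option (Fin n))
    (h : Fin n) : Finset (Fin m) :=
  (bundle Y h).filter (IsDemoted P X Y)

noncomputable def demotionFlow (P : Fin m → Fin n → Fin n → Prop) (X Y : Fin m → Option (Fin n))
    (d : Fin m) (g : Fin n) : ℤ :=
  (if Y d = some g ∧ IsDemoted P X Y d then 1 else 0) -
    (if X d = some g ∧ IsDemoted P X Y d then 1 else 0)

theorem sum_demotionFlow (d : Fin m) : ∑ g, demotionFlow P X Y d g = 0 := by
  unfold demotionFlow
  by_cases hD : IsDemoted P X Y d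
  · obtain ⟨x, y, hx, hy, -⟩ := id hD
    simp [hx, hy, hD, sum_sub_distrib]
  · simp [hD]

def rankGain (v : Fin n → Finset (Fin m) → ℤ) (X Y : Fin m → Option (Fin n)) (g : Fin n)
    (i : ℕ) : ℤ :=
  v g (prefixOf (bundle X g) i ∪ prefixOf (bundle Y g) i) - v g (prefixOf (bundle X g) i)

noncomputable def netDemotions (P : Fin m → Fin n → Fin n → Prop) (X Y : Fin m → Option (Fin n))
    (h : Fin n) (i : ℕ) : ℤ :=
  (prefixOf (demotedInto P X Y h) i).card - (prefixOf (bundle X h \ bundle Y h) i).card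

theorem rankGain_succ_le {g : Fin n} {i : ℕ} (hi : i < m) (hvg : IsMRF (v g)) (hwg : w g = v g)
    (hP : Std.Trichotomous (P ⟨i, hi⟩)) (hX : IsSDOutput v P X) (hY : IsSDOutput w P Y) :
    rankGain v X Y g (i + 1) ≤ rankGain v X Y g i + demotionFlow P X Y ⟨i, hi⟩ g := by
  set d : Fin m := ⟨i, hi⟩
  set A := prefixOf (bundle X g) i
  set B := prefixOf (bundle Y g) i
  have hd : d ∉ A ∪ B := by simp [A, B, d]
  have hsubmod := hvg.2.2 A (A ∪ B) d subset_union_left hd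
  have hXb : bundleBefore X g d = A := bundleBefore_eq_prefixOf X g hi
  have hYb : bundleBefore Y g d = B := bundleBefore_eq_prefixOf Y g hi
  unfold rankGain demotionFlow
  by_cases ha : X d = some g <;> by_cases hb : Y d = some g
  · rw [prefixOf_succ_of_mem hi (mem_bundle.2 ha), prefixOf_succ_of_mem hi (mem_bundle.2 hb),
      insert_union, union_insert, insert_idem]
    simp only [ha, hb, true_and, sub_self]
    linarith
  · rw [prefixOf_succ_of_mem hi (mem_bundle.2 ha),
      prefixOf_succ_of_notMem hi (mt mem_bundle.1 hb), insert_union]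
    simp only [ha, hb, true_and, false_and, if_false]
    by_cases hD : IsDemoted P X Y d
    · obtain ⟨x, y, hx, hy, hxy⟩ := id hD
      obtain rfl : x = g := Option.some.inj (hx.symm.trans ha)
      have hgain := ((hX d).1 x ha).1
      have hreject := ((hY d).1 y hy).2 x hxy
      rw [hXb] at hgain
      rw [hYb, hwg, sub_eq_zero] at hreject
      rw [hvg.rank_insert_eq_of_subset subset_union_right hd hreject, if_pos hD]
      linarith
    · rw [if_neg hD]
      linarith
  · rw [prefixOf_succ_of_notMem hi (mt mem_bundle.1 ha),
      prefixOf_succ_of_mem hi (mem_bundle.2 hb), union_insert]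
    simp only [ha, hb, true_and, false_and, if_false]
    by_cases hD : IsDemoted P X Y d
    · rw [if_pos hD]
      linarith [hvg.rank_insert_le (A ∪ B) d]
    · have hreject := hX.rank_insert_bundleBefore_eq_of_not_prefers hP ha
        fun x hx hxg => hD ⟨x, g, hx, hb, hxg⟩
      rw [hXb] at hreject
      rw [hvg.rank_insert_eq_of_subset subset_union_left hd hreject, if_neg hD]
      linarith
  · rw [prefixOf_succ_of_notMem hi (mt mem_bundle.1 ha),
      prefixOf_succ_of_notMem hi (mt mem_bundle.1 hb)]
    simp [ha, hb]

theorem netDemotions_succ_le {h : Fin n} {i : ℕ} (hi : i < m) (hirr : ∀ x, ¬ P ⟨i, hi⟩ x x) :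
    netDemotions P X Y h (i + 1) ≤ netDemotions P X Y h i + demotionFlow P X Y ⟨i, hi⟩ h := by
  have hleave : X ⟨i, hi⟩ = some h ∧ IsDemoted P X Y ⟨i, hi⟩ → Y ⟨i, hi⟩ ≠ some h := by
    rintro ⟨hx, x, y, hx', hy, hxy⟩ hy'
    obtain rfl := Option.some.inj (hx'.symm.trans hx)
    obtain rfl := Option.some.inj (hy.symm.trans hy')
    exact hirr _ hxy
  have hW : ⟨i, hi⟩ ∈ demotedInto P X Y h ↔ Y ⟨i, hi⟩ = some h ∧ IsDemoted P X Y ⟨i, hi⟩ := by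
    simp [demotedInto, mem_bundle]
  have hR : ⟨i, hi⟩ ∈ bundle X h \ bundle Y h ↔ X ⟨i, hi⟩ = some h ∧ Y ⟨i, hi⟩ ≠ some h := by
    simp [mem_bundle]
  unfold netDemotions demotionFlow
  rw [card_prefixOf_succ hi, card_prefixOf_succ hi]
  simp only [hW, hR]
  split_ifs <;> first | linarith | tauto

theorem netDemotions_add_sum_rankGain_nonpos {h : Fin n} (hv : ∀ g, IsMRF (v g))
    (hP : ∀ d, IsStrictTotalOrder (Fin n) (P d)) (hw : ∀ g ≠ h, w g = v g)
    (hX : IsSDOutput v P X) (hY : IsSDOutput w P Y) :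
    ∀ i ≤ m, netDemotions P X Y h i + ∑ g ∈ univ.erase h, rankGain v X Y g i ≤ 0 := by
  intro i
  induction i with
  | zero => simp [netDemotions, rankGain]
  | succ i ih =>
    intro hi
    have hi' : i < m := hi
    have hflow := sum_demotionFlow (P := P) (X := X) (Y := Y) ⟨i, hi'⟩
    rw [← add_sum_erase _ _ (mem_univ h)] at hflow
    have hgains : ∑ g ∈ univ.erase h, rankGain v X Y g (i + 1) ≤
        ∑ g ∈ univ.erase h, (rankGain v X Y g i + demotionFlow P X Y ⟨i, hi'⟩ g) :=
      sum_le_sum fun g hg =>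
        rankGain_succ_le hi' (hv g) (hw g (ne_of_mem_erase hg)) (hP _).toTrichotomous hX hY
    have hnet := netDemotions_succ_le (X := X) (Y := Y) (h := h) hi'
      fun x => (hP ⟨i, hi'⟩).irrefl x
    rw [sum_add_distrib] at hgains
    linarith [ih hi'.le]

theorem card_demotedInto_le {h : Fin n} (hv : ∀ g, IsMRF (v g))
    (hP : ∀ d, IsStrictTotalOrder (Fin n) (P d)) (hw : ∀ g ≠ h, w g = v g)
    (hX : IsSDOutput v P X) (hY : IsSDOutput w P Y) :
    (demotedInto P X Y h).card ≤ (bundle X h \ bundle Y h).card := by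
  have hinv := netDemotions_add_sum_rankGain_nonpos hv hP hw hX hY m le_rfl
  have hgains : 0 ≤ ∑ g ∈ univ.erase h, rankGain v X Y g m :=
    sum_nonneg fun g _ => sub_nonneg.2 ((hv g).mono subset_union_left)
  simp only [netDemotions, prefixOf_eq_self] at hinv
  omega

theorem rank_bundle_union_undemoted_eq {h : Fin n} (hvh : IsMRF (v h))
    (hP : ∀ d, Std.Trichotomous (P d)) (hX : IsSDOutput v P X) :
    v h (bundle X h ∪ (bundle Y h \ demotedInto P X Y h)) = v h (bundle X h) := by
  refine hvh.rank_union_eq_of_spanned fun e he heX => ?_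
  simp only [demotedInto, mem_sdiff, mem_filter, mem_bundle, not_and] at he
  exact hX.rank_insert_bundle_eq_of_not_prefers hvh (hP e) heX
    fun x hx hxh => he.2 he.1 ⟨x, h, hx, he.1, hxh⟩

end SerialDictatorship

open SerialDictatorship

theorem sd_two_approx_hospital_sp_general {n m : ℕ} (v : Fin n → Finset (Fin m) → ℤ)
    (P : Fin m → Fin n → Fin n → Prop)
    (hv : ∀ h, IsMRF (v h)) (hP : ∀ d, IsStrictTotalOrder (Fin n) (P d))
    (h : Fin n) (v' : Finset (Fin m) → ℤ)
    (X Y : Fin m → Option (Fin n))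
    (hX : IsSDOutput v P X) (hY : IsSDOutput (Function.update v h v') P Y) :
    v h (bundle Y h) ≤ 2 * v h (bundle X h) := by
  set W := demotedInto P X Y h
  have hW : W.card ≤ (bundle X h).card :=
    (card_demotedInto_le hv hP (fun g hg => Function.update_of_ne hg v' v) hX hY).trans
      (card_le_card sdiff_subset)
  have hXh : v h (bundle X h) = (bundle X h).card := hX.nonRedundant (fun g => (hv g).1) h
  calc v h (bundle Y h) ≤ v h ((bundle X h ∪ (bundle Y h \ W)) ∪ W) :=
        (hv h).mono fun e he => by by_cases heW : e ∈ W <;> simp [he, heW]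
    _ ≤ v h (bundle X h ∪ (bundle Y h \ W)) + W.card := (hv h).rank_union_le_add_card _ _
    _ = v h (bundle X h) + W.card := by
        rw [rank_bundle_union_undemoted_eq (hv h) (fun d => (hP d).toTrichotomous) hX]
    _ ≤ 2 * v h (bundle X h) := by omega

/-- Theorem 3.16: the serial dictatorship mechanism is 2-approximately
hospital-strategyproof when hospitals have matroid rank valuations. -/
theorem sd_two_approx_hospital_sp {n m : ℕ} (v : Fin n → Finset (Fin m) → ℤ)
    (P : Fin m → Fin n → Fin n → Prop)
    (hv : ∀ h, IsMRF (v h)) (hP : ∀ d, IsStrictTotalOrder (Fin n) (P d))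
    (h : Fin n) (v' : Finset (Fin m) → ℤ) (hv' : IsMRF v')
    (X Y : Fin m → Option (Fin n))
    (hX : IsSDOutput v P X) (hY : IsSDOutput (Function.update v h v') P Y) :
    v h (bundle Y h) ≤ 2 * v h (bundle X h) :=
  sd_two_approx_hospital_sp_general v P hv hP h v' X Y hX hY
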